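/- Let φ and ψ be qpf formulas, x0,x1,…,xk variables, and r a relation symbol of arity k; for a formula χ let ∃∃χ denote its existential closure. Then: (1) tw([[∃∃(φ * x0=x1 * … * x0=xk)]]) ≤ tw([[∃∃φ]]); (2) if φ * x0≠x1 * … * x0≠xk is satisfiable, then tw([[∃∃φ]]) − 1 ≤ tw([[∃∃(φ * x0≠x1 * … * x0≠xk)]]) ≤ tw([[∃∃φ]]); (3) if φ * r(x1,…,xk) is satisfiable, then tw([[∃∃φ]]) − 1 ≤ tw([[∃∃(φ * r(x1,…,xk))]]) ≤ tw([[∃∃φ]]) + k; (4) if ψ contains only relation atoms, then tw([[∃∃(φ*ψ)]]) ≤ tw([[∃∃φ]]) + |fv(ψ)|. -/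

import Mathlib

/-!
Common definitions for the formalization of
"The Treewidth Boundedness Problem for an Inductive Separation Logic of Relations".
-/

namespace SLRTW

/-! ### Relational structures over a fixed universe `V` -/

/-- A structure over the relational signature given by `Rel`, `ar` with universe `V`:
each relation symbol is interpreted as a finite set of tuples, and only finitely many
relation symbols have a nonempty interpretation. -/
structure Str (Rel : Type) (ar : Rel → ℕ) (V : Type) where
  interp : ∀ r : Rel, Set (Fin (ar r) → V)
  finite_interp : ∀ r, (interp r).Finite
  finite_active : {r : Rel | interp r ≠ ∅}.Finite

/-- Formulas of the separation logic of relations, over relation symbols `Rel` (with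
arities `ar`) and predicate symbols `Pr` (with arities `pa`).  Variables are natural
numbers; by convention, the parameters of a predicate of arity `n` are `0, …, n-1`. -/
inductive SLR (Rel : Type) (ar : Rel → ℕ) (Pr : Type) (pa : Pr → ℕ) : Type where
  | emp : SLR Rel ar Pr pa
  | eq (x y : ℕ) : SLR Rel ar Pr pa
  | ne (x y : ℕ) : SLR Rel ar Pr pa
  | rel (r : Rel) (a : Fin (ar r) → ℕ) : SLR Rel ar Pr pa
  | pred (A : Pr) (a : Fin (pa A) → ℕ) : SLR Rel ar Pr pa
  | star (φ ψ : SLR Rel ar Pr pa) : SLR Rel ar Pr pa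
  | ex (x : ℕ) (φ : SLR Rel ar Pr pa) : SLR Rel ar Pr pa

/-- An RGB color scheme: a partition of the set of colors `𝒫(Rel)` into red, green
and blue colors, such that any two blue colors intersect, every green color intersects
every blue color, and every red color is disjoint from some blue color. -/
structure RGB (Rel : Type) where
  red : Set (Set Rel)
  green : Set (Set Rel)
  blue : Set (Set Rel)
  cover : ∀ C : Set Rel, C ∈ red ∨ C ∈ green ∨ C ∈ blue
  red_green : red ∩ green = ∅
  red_blue : red ∩ blue = ∅
  green_blue : green ∩ blue = ∅
  blue_blue_meet : ∀ C1 ∈ blue, ∀ C2 ∈ blue, (C1 ∩ C2).Nonempty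
  green_blue_meet : ∀ C1 ∈ green, ∀ C2 ∈ blue, (C1 ∩ C2).Nonempty
  red_sep : ∀ C1 ∈ red, ∃ C2 ∈ blue, C1 ∩ C2 = ∅

section Defs1

variable {Rel : Type} {ar : Rel → ℕ} {V : Type} {Pr : Type} {pa : Pr → ℕ}

/-- The support of a structure: the elements occurring in some tuple. -/
def Str.supp (S : Str Rel ar V) : Set V :=
  { u | ∃ (r : Rel) (t : Fin (ar r) → V), t ∈ S.interp r ∧ ∃ i, t i = u }

/-- Two structures are locally disjoint iff their interpretations are pointwise disjoint. -/
def LocDisj (S1 S2 : Str Rel ar V) : Prop :=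
  ∀ r, S1.interp r ∩ S2.interp r = ∅

/-- Composition of structures (pointwise union of the interpretations). -/
def Str.comp (S1 S2 : Str Rel ar V) : Str Rel ar V where
  interp r := S1.interp r ∪ S2.interp r
  finite_interp r := (S1.finite_interp r).union (S2.finite_interp r)
  finite_active := by
    refine (S1.finite_active.union S2.finite_active).subset ?_
    intro r hr
    simp only [Set.mem_setOf_eq, Set.mem_union, ne_eq] at hr ⊢
    rw [Set.union_empty_iff] at hr
    tauto

/-- Composition of a finite family of structures. -/
def bigComp {n : ℕ} (Ss : Fin n → Str Rel ar V) : Str Rel ar V where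
  interp r := ⋃ i, (Ss i).interp r
  finite_interp r := Set.finite_iUnion fun i => (Ss i).finite_interp r
  finite_active := by
    refine (Set.finite_iUnion fun i => (Ss i).finite_active).subset ?_
    intro r hr
    simp only [Set.mem_setOf_eq, ne_eq, Set.iUnion_eq_empty, Set.mem_iUnion] at hr ⊢
    push_neg at hr
    obtain ⟨i, hi⟩ := hr
    exact ⟨i, Set.nonempty_iff_ne_empty.mp hi⟩

/-- A tree decomposition of a structure: a finite tree whose nodes carry finite bags of
elements, covering every tuple, and such that the set of nodes containing any given
support element is nonempty and connected. -/
structure TreeDecomp (S : Str Rel ar V) where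
  ι : Type
  instFin : Fintype ι
  G : SimpleGraph ι
  isTree : G.IsTree
  bag : ι → Finset V
  bag_cover : ∀ (r : Rel), ∀ t ∈ S.interp r, ∃ n : ι, ∀ i, t i ∈ bag n
  bag_conn : ∀ u ∈ S.supp, (SimpleGraph.induce {n : ι | u ∈ bag n} G).Connected

attribute [instance] TreeDecomp.instFin

/-- The width of a tree decomposition: maximal bag size minus one. -/
def TreeDecomp.width {S : Str Rel ar V} (T : TreeDecomp S) : ℕ :=
  (Finset.univ.sup fun n : T.ι => (T.bag n).card) - 1

/-- The treewidth of a structure: the minimal width of a tree decomposition. -/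
noncomputable def tw (S : Str Rel ar V) : ℕ :=
  sInf { w | ∃ T : TreeDecomp S, T.width = w }

/-- A set of structures is treewidth-bounded iff the treewidths of its members are
bounded. -/
def TWB (𝒮 : Set (Str Rel ar V)) : Prop :=
  ∃ k : ℕ, ∀ S ∈ 𝒮, tw S ≤ k

/-- The supremum of the treewidths of a set of structures (in `ℕ∞`). -/
noncomputable def twSet (𝒮 : Set (Str Rel ar V)) : ℕ∞ :=
  ⨆ S ∈ 𝒮, (tw S : ℕ∞)

namespace SLR

/-- Free variables of a formula. -/
def fv : SLR Rel ar Pr pa → Set ℕ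
  | .emp => ∅
  | .eq x y => {x, y}
  | .ne x y => {x, y}
  | .rel _ a => Set.range a
  | .pred _ a => Set.range a
  | .star φ ψ => φ.fv ∪ ψ.fv
  | .ex x φ => φ.fv \ {x}

/-- All variables (free or bound) occurring in a formula. -/
def vars : SLR Rel ar Pr pa → Set ℕ
  | .emp => ∅
  | .eq x y => {x, y}
  | .ne x y => {x, y}
  | .rel _ a => Set.range a
  | .pred _ a => Set.range a
  | .star φ ψ => φ.vars ∪ ψ.vars
  | .ex x φ => insert x φ.vars

/-- Predicate-free formulas. -/
def PredFree : SLR Rel ar Pr pa → Prop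
  | .pred _ _ => False
  | .star φ ψ => φ.PredFree ∧ ψ.PredFree
  | .ex _ φ => φ.PredFree
  | _ => True

/-- Quantifier- and predicate-free (qpf) formulas. -/
def QPF : SLR Rel ar Pr pa → Prop
  | .pred _ _ => False
  | .ex _ _ => False
  | .star φ ψ => φ.QPF ∧ ψ.QPF
  | _ => True

/-- Formulas containing only relation atoms. -/
def RelOnly : SLR Rel ar Pr pa → Prop
  | .rel _ _ => True
  | .star φ ψ => φ.RelOnly ∧ ψ.RelOnly
  | _ => False

/-- Formulas containing only equality atoms (and `emp`). -/
def EqOnly : SLR Rel ar Pr pa → Prop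
  | .emp => True
  | .eq _ _ => True
  | .star φ ψ => φ.EqOnly ∧ ψ.EqOnly
  | _ => False

/-- Equality-free formulas: no equality atom and no predicate atom in which the same
variable occurs twice. -/
def EqFreeF : SLR Rel ar Pr pa → Prop
  | .eq _ _ => False
  | .pred _ a => Function.Injective a
  | .star φ ψ => φ.EqFreeF ∧ ψ.EqFreeF
  | .ex _ φ => φ.EqFreeF
  | _ => True

/-- The number of predicate atoms occurring in a formula. -/
def npred : SLR Rel ar Pr pa → ℕ
  | .pred _ _ => 1
  | .star φ ψ => φ.npred + ψ.npred
  | .ex _ φ => φ.npred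
  | _ => 0

/-- The number of relation atoms occurring in a formula. -/
def nrel : SLR Rel ar Pr pa → ℕ
  | .rel _ _ => 1
  | .star φ ψ => φ.nrel + ψ.nrel
  | .ex _ φ => φ.nrel
  | _ => 0

/-- The set of relation symbols occurring in a formula. -/
def rels : SLR Rel ar Pr pa → Set Rel
  | .rel r _ => {r}
  | .star φ ψ => φ.rels ∪ ψ.rels
  | .ex _ φ => φ.rels
  | _ => ∅

/-- The set of predicate symbols occurring in a formula. -/
def preds : SLR Rel ar Pr pa → Set Pr
  | .pred A _ => {A}
  | .star φ ψ => φ.preds ∪ ψ.preds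
  | .ex _ φ => φ.preds
  | _ => ∅

/-- The quantifier-free matrix of a formula (erasing all existential quantifiers). -/
def matrix : SLR Rel ar Pr pa → SLR Rel ar Pr pa
  | .ex _ φ => φ.matrix
  | .star φ ψ => .star φ.matrix ψ.matrix
  | φ => φ

/-- The list of bound variables of a formula. -/
def binders : SLR Rel ar Pr pa → List ℕ
  | .ex x φ => x :: φ.binders
  | .star φ ψ => φ.binders ++ ψ.binders
  | _ => []

/-- A formula is well-named iff its bound variables are pairwise distinct and distinct
from its free variables.  For a well-named formula, the matrix faithfully represents
the prenex form. -/
def WellNamed (χ : SLR Rel ar Pr pa) : Prop :=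
  χ.binders.Nodup ∧ ∀ x ∈ χ.binders, x ∉ χ.fv

/-- The disequality `x ≠ y` occurs in the formula (as an unordered pair). -/
def neOccurs : SLR Rel ar Pr pa → ℕ → ℕ → Prop
  | .ne a b, x, y => (a = x ∧ b = y) ∨ (a = y ∧ b = x)
  | .star φ ψ, x, y => φ.neOccurs x y ∨ ψ.neOccurs x y
  | .ex _ φ, x, y => φ.neOccurs x y
  | _, _, _ => False

/-- The equality `x = y` occurs in the formula (as an unordered pair). -/
def eqOccurs : SLR Rel ar Pr pa → ℕ → ℕ → Prop
  | .eq a b, x, y => (a = x ∧ b = y) ∨ (a = y ∧ b = x)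
  | .star φ ψ, x, y => φ.eqOccurs x y ∨ ψ.eqOccurs x y
  | .ex _ φ, x, y => φ.eqOccurs x y
  | _, _, _ => False

end SLR

/-- The nullary predicate atom `A()` (the arguments are irrelevant when `pa A = 0`). -/
def natom (A : Pr) : SLR Rel ar Pr pa := .pred A fun _ => 0

/-- Iterated separating conjunction: `starAll φ [χ1, …, χn] = χ1 * (χ2 * … * (χn * φ))`. -/
def starAll (φ : SLR Rel ar Pr pa) : List (SLR Rel ar Pr pa) → SLR Rel ar Pr pa
  | [] => φ
  | χ :: l => .star χ (starAll φ l)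

end Defs1

/-- A set of inductive definitions (SID): a finite set of rules `A(0,…,pa A - 1) ← φ`
where the free variables of `φ` are among the parameters `0, …, pa A - 1`. -/
structure SID (Rel : Type) (ar : Rel → ℕ) (Pr : Type) (pa : Pr → ℕ) where
  rules : Pr → Set (SLR Rel ar Pr pa)
  finite_rules : {p : Pr × SLR Rel ar Pr pa | p.2 ∈ rules p.1}.Finite
  wf : ∀ A, ∀ φ ∈ rules A, SLR.fv φ ⊆ {x | x < pa A}

section Defs2

variable {Rel : Type} {ar : Rel → ℕ} {V : Type} {Pr : Type} {pa : Pr → ℕ}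

/-- The empty structure predicate. -/
def EmpS (S : Str Rel ar V) : Prop := ∀ r, S.interp r = ∅

/-- The satisfaction relation of SLR, parameterized by a store and an SID.
A predicate atom `A(y₁,…,yₙ)` is satisfied iff the body of some rule for `A` is
satisfied under the store mapping the parameter `i` to the value of `yᵢ₊₁`. -/
inductive Sat (Δ : SID Rel ar Pr pa) :
    Str Rel ar V → (ℕ → V) → SLR Rel ar Pr pa → Prop where
  | emp {S : Str Rel ar V} {s : ℕ → V} : EmpS S → Sat Δ S s .emp
  | eq {S : Str Rel ar V} {s : ℕ → V} {x y : ℕ} :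
      EmpS S → s x = s y → Sat Δ S s (.eq x y)
  | ne {S : Str Rel ar V} {s : ℕ → V} {x y : ℕ} :
      EmpS S → s x ≠ s y → Sat Δ S s (.ne x y)
  | rel {S : Str Rel ar V} {s : ℕ → V} {r : Rel} {a : Fin (ar r) → ℕ} :
      S.interp r = {fun i => s (a i)} → (∀ r', r' ≠ r → S.interp r' = ∅) →
      Sat Δ S s (.rel r a)
  | pred {S : Str Rel ar V} {s : ℕ → V} {A : Pr} {a : Fin (pa A) → ℕ}
      {body : SLR Rel ar Pr pa} :
      body ∈ Δ.rules A →
      Sat Δ S (fun n => if h : n < pa A then s (a ⟨n, h⟩) else s n) body →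
      Sat Δ S s (.pred A a)
  | star {S1 S2 : Str Rel ar V} {s : ℕ → V} {φ ψ : SLR Rel ar Pr pa} :
      LocDisj S1 S2 → Sat Δ S1 s φ → Sat Δ S2 s ψ →
      Sat Δ (S1.comp S2) s (.star φ ψ)
  | ex {S : Str Rel ar V} {s : ℕ → V} {x : ℕ} {φ : SLR Rel ar Pr pa} (u : V) :
      Sat Δ S (Function.update s x u) φ → Sat Δ S s (.ex x φ)

/-- The set of `Δ`-models of a sentence (over universe `V`). -/
def SMod (Δ : SID Rel ar Pr pa) (φ : SLR Rel ar Pr pa) : Set (Str Rel ar V) :=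
  { S | ∃ s : ℕ → V, Sat Δ S s φ }

/-- `IsSubst f φ φ'` holds iff `φ'` is obtained from `φ` by the capture-avoiding
substitution of `f x` for each free variable `x`, the bound variables being renamed
to avoid clashes. -/
inductive IsSubst : (ℕ → ℕ) → SLR Rel ar Pr pa → SLR Rel ar Pr pa → Prop where
  | emp {f : ℕ → ℕ} : IsSubst f .emp .emp
  | eq {f : ℕ → ℕ} {x y : ℕ} : IsSubst f (.eq x y) (.eq (f x) (f y))
  | ne {f : ℕ → ℕ} {x y : ℕ} : IsSubst f (.ne x y) (.ne (f x) (f y))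
  | rel {f : ℕ → ℕ} {r : Rel} {a : Fin (ar r) → ℕ} :
      IsSubst f (.rel r a) (.rel r (f ∘ a))
  | pred {f : ℕ → ℕ} {A : Pr} {a : Fin (pa A) → ℕ} :
      IsSubst f (.pred A a) (.pred A (f ∘ a))
  | star {f : ℕ → ℕ} {φ ψ φ' ψ' : SLR Rel ar Pr pa} :
      IsSubst f φ φ' → IsSubst f ψ ψ' → IsSubst f (.star φ ψ) (.star φ' ψ')
  | ex {f : ℕ → ℕ} {x z : ℕ} {φ φ' : SLR Rel ar Pr pa} :
      (∀ y ∈ SLR.fv φ, y ≠ x → f y ≠ z) →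
      IsSubst (Function.update f x z) φ φ' →
      IsSubst f (.ex x φ) (.ex z φ')

/-- One unfolding step: replace one predicate atom `A(y₁,…,yₙ)` by the body of a rule
for `A`, with the parameters substituted by `y₁,…,yₙ` (bound variables renamed to
avoid clashes). -/
inductive Step (Δ : SID Rel ar Pr pa) : SLR Rel ar Pr pa → SLR Rel ar Pr pa → Prop where
  | unfold {A : Pr} {a : Fin (pa A) → ℕ} {body ψ : SLR Rel ar Pr pa} :
      body ∈ Δ.rules A →
      IsSubst (fun n => if h : n < pa A then a ⟨n, h⟩ else n) body ψ →
      Step Δ (.pred A a) ψ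
  | starL {φ φ' ψ : SLR Rel ar Pr pa} : Step Δ φ φ' → Step Δ (.star φ ψ) (.star φ' ψ)
  | starR {φ ψ ψ' : SLR Rel ar Pr pa} : Step Δ ψ ψ' → Step Δ (.star φ ψ) (.star φ ψ')
  | exC {x : ℕ} {φ φ' : SLR Rel ar Pr pa} : Step Δ φ φ' → Step Δ (.ex x φ) (.ex x φ')

/-- `Δ`-unfolding: the reflexive-transitive closure of unfolding steps. -/
def Unfolds (Δ : SID Rel ar Pr pa) : SLR Rel ar Pr pa → SLR Rel ar Pr pa → Prop :=
  Relation.ReflTransGen (Step Δ)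

/-- `x = y` is a logical consequence of `ψ`. -/
def EqConseq (Δ : SID Rel ar Pr pa) (ψ : SLR Rel ar Pr pa) (x y : ℕ) : Prop :=
  ∀ (S : Str Rel ar V) (s : ℕ → V), Sat Δ S s ψ → s x = s y

/-- A store is canonical for `ψ` iff it identifies only variables that are equated as a
logical consequence of `ψ`. -/
def CanonicalStore (Δ : SID Rel ar Pr pa) (s : ℕ → V) (ψ : SLR Rel ar Pr pa) : Prop :=
  ∀ x ∈ ψ.fv, ∀ y ∈ ψ.fv, s x = s y → EqConseq (V := V) Δ ψ x y

/-- `(S, d)` is a rich canonical `Δ`-model of `φ`: for some complete `Δ`-unfolding of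
`φ` into a well-named predicate-free formula `χ` (i.e. of the form `∃x⃗.ψ` with `ψ` qpf,
up to hoisting of quantifiers) and some store canonical for the matrix `ψ`, the
structure `S` satisfies `ψ` and `d` records the disequalities of `ψ` under the store. -/
def RichCanonical (Δ : SID Rel ar Pr pa) (φ : SLR Rel ar Pr pa)
    (S : Str Rel ar V) (d : V → V → Prop) : Prop :=
  ∃ χ : SLR Rel ar Pr pa, Unfolds Δ φ χ ∧ χ.PredFree ∧ χ.WellNamed ∧
    ∃ s : ℕ → V, CanonicalStore Δ s χ.matrix ∧ Sat Δ S s χ.matrix ∧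
      ∀ u v : V, d u v ↔ ∃ x y : ℕ, s x = u ∧ s y = v ∧ χ.matrix.neOccurs x y

/-- The set of canonical `Δ`-models of `φ`. -/
def Canonical (Δ : SID Rel ar Pr pa) (φ : SLR Rel ar Pr pa) : Set (Str Rel ar V) :=
  { S | ∃ d, RichCanonical Δ φ S d }

/-- `S1` is a substructure of `S2`: its interpretation consists exactly of the tuples of
`S2` all of whose elements belong to the support of `S1`. -/
def Substr (S1 S2 : Str Rel ar V) : Prop :=
  ∀ r, S1.interp r = { t ∈ S2.interp r | ∀ i, t i ∈ S1.supp }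

/-- Two elements touch iff they occur in a common tuple. -/
def Touching (S : Str Rel ar V) (u v : V) : Prop :=
  ∃ (r : Rel) (t : Fin (ar r) → V), t ∈ S.interp r ∧ (∃ i, t i = u) ∧ ∃ j, t j = v

/-- A structure is connected iff any two support elements are joined by a path of
pairwise overlapping tuples. -/
def ConnectedS (S : Str Rel ar V) : Prop :=
  ∀ u ∈ S.supp, ∀ v ∈ S.supp, Relation.ReflTransGen (Touching S) u v

/-- `S1` is a maximally connected substructure of `S2`. -/
def MaxConn (S1 S2 : Str Rel ar V) : Prop :=
  Substr S1 S2 ∧ ConnectedS S1 ∧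
    ∀ S1' : Str Rel ar V, Substr S1' S2 → ConnectedS S1' → Substr S1 S1' → S1 = S1'

/-- The set of maximally connected substructures of a structure. -/
def split (S : Str Rel ar V) : Set (Str Rel ar V) := { S' | MaxConn S' S }

/-- `split`, lifted to sets of structures. -/
def splitSet (𝒮 : Set (Str Rel ar V)) : Set (Str Rel ar V) := ⋃ S ∈ 𝒮, split S

/-- The smallest equivalence relation containing `R`. -/
def EqvOf (R : V → V → Prop) (a b : V) : Prop :=
  ∀ E : V → V → Prop, Equivalence E → (∀ x y, R x y → E x y) → E a b

/-- An equivalence relation is compatible with a structure iff any two distinct tuples of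
the interpretation of a relation symbol differ at some position modulo the relation. -/
def CompatibleE (S : Str Rel ar V) (E : V → V → Prop) : Prop :=
  ∀ r, ∀ t1 ∈ S.interp r, ∀ t2 ∈ S.interp r, t1 ≠ t2 → ∃ i, ¬ E (t1 i) (t2 i)

/-- The image of a structure under a map on elements. -/
def mapStr (h : V → V) (S : Str Rel ar V) : Str Rel ar V where
  interp r := (fun t => h ∘ t) '' S.interp r
  finite_interp r := (S.finite_interp r).image _
  finite_active := by
    refine S.finite_active.subset ?_
    intro r hr
    simp only [Set.mem_setOf_eq, ne_eq] at hr ⊢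
    intro h0
    exact hr (by rw [h0, Set.image_empty])

/-- `S'` is (a copy over `V` of) the quotient of `S` by the equivalence relation `E`. -/
def QuotBy (S : Str Rel ar V) (E : V → V → Prop) (S' : Str Rel ar V) : Prop :=
  ∃ h : V → V, (∀ u ∈ S.supp, ∀ v ∈ S.supp, (E u v ↔ h u = h v)) ∧ S' = mapStr h S

/-- `S'` is an isomorphic copy of `S` (over the same universe `V`). -/
def IsoCopy (S S' : Str Rel ar V) : Prop :=
  ∃ h : V → V, Set.InjOn h S.supp ∧ S' = mapStr h S

/-- A matching: a set of pairs such that distinct pairs share no element. -/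
def IsMatching (M : Set (V × V)) : Prop :=
  ∀ p ∈ M, ∀ q ∈ M, p ≠ q → ({p.1, p.2} ∩ {q.1, q.2} : Set V) = ∅

/-- The set of internal fusions of a structure: quotients by compatible equivalence
relations (up to isomorphism). -/
def IntFusion (S : Str Rel ar V) : Set (Str Rel ar V) :=
  { S' | ∃ E : V → V → Prop, Equivalence E ∧ CompatibleE S E ∧ QuotBy S E S' }

/-- Internal fusions of members of a set of structures. -/
def ifSet (𝒮 : Set (Str Rel ar V)) : Set (Str Rel ar V) := ⋃ S ∈ 𝒮, IntFusion S

/-- Internal fusions of a rich canonical model: quotients by compatible equivalence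
relations that do not violate the disequality relation `d`. -/
def SIntFusion (S : Str Rel ar V) (d : V → V → Prop) : Set (Str Rel ar V) :=
  { S' | ∃ E : V → V → Prop, Equivalence E ∧ CompatibleE S E ∧
      (∀ u v, d u v → ¬ E u v) ∧ QuotBy S E S' }

/-- External fusions of two structures: quotients of the composition of disjoint
isomorphic copies by the smallest equivalence relation containing a nonempty matching
between supports that is compatible with the composition. -/
def ExtFusion (S1 S2 : Str Rel ar V) : Set (Str Rel ar V) :=
  { S' | ∃ (S1' S2' : Str Rel ar V) (M : Set (V × V)),
      IsoCopy S1 S1' ∧ IsoCopy S2 S2' ∧ S1'.supp ∩ S2'.supp = ∅ ∧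
      M.Nonempty ∧ IsMatching M ∧ (∀ p ∈ M, p.1 ∈ S1'.supp ∧ p.2 ∈ S2'.supp) ∧
      CompatibleE (S1'.comp S2') (EqvOf fun a b => (a, b) ∈ M) ∧
      QuotBy (S1'.comp S2') (EqvOf fun a b => (a, b) ∈ M) S' }

/-- Single-pair external fusions: external fusions whose matching is a single pair. -/
def ExtFusion1 (S1 S2 : Str Rel ar V) : Set (Str Rel ar V) :=
  { S' | ∃ (S1' S2' : Str Rel ar V) (M : Set (V × V)),
      IsoCopy S1 S1' ∧ IsoCopy S2 S2' ∧ S1'.supp ∩ S2'.supp = ∅ ∧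
      (∃ p : V × V, M = {p}) ∧ IsMatching M ∧
      (∀ p ∈ M, p.1 ∈ S1'.supp ∧ p.2 ∈ S2'.supp) ∧
      CompatibleE (S1'.comp S2') (EqvOf fun a b => (a, b) ∈ M) ∧
      QuotBy (S1'.comp S2') (EqvOf fun a b => (a, b) ∈ M) S' }

/-- Closure of a set of structures under external fusions (structures being identified
up to isomorphism). -/
inductive efStar (𝒮 : Set (Str Rel ar V)) : Str Rel ar V → Prop where
  | base {S : Str Rel ar V} : S ∈ 𝒮 → efStar 𝒮 S
  | iso {S S' : Str Rel ar V} : efStar 𝒮 S → IsoCopy S S' → efStar 𝒮 S'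
  | fuse {S1 S2 S : Str Rel ar V} :
      efStar 𝒮 S1 → efStar 𝒮 S2 → S ∈ ExtFusion S1 S2 → efStar 𝒮 S

def efStarSet (𝒮 : Set (Str Rel ar V)) : Set (Str Rel ar V) := { S | efStar 𝒮 S }

/-- Closure of a set of structures under single-pair external fusions. -/
inductive ef1Star (𝒮 : Set (Str Rel ar V)) : Str Rel ar V → Prop where
  | base {S : Str Rel ar V} : S ∈ 𝒮 → ef1Star 𝒮 S
  | iso {S S' : Str Rel ar V} : ef1Star 𝒮 S → IsoCopy S S' → ef1Star 𝒮 S'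
  | fuse {S1 S2 S : Str Rel ar V} :
      ef1Star 𝒮 S1 → ef1Star 𝒮 S2 → S ∈ ExtFusion1 S1 S2 → ef1Star 𝒮 S

def ef1StarSet (𝒮 : Set (Str Rel ar V)) : Set (Str Rel ar V) := { S | ef1Star 𝒮 S }

/-- Closure of a set of structures under both internal and external fusions. -/
inductive iefStar (𝒮 : Set (Str Rel ar V)) : Str Rel ar V → Prop where
  | base {S : Str Rel ar V} : S ∈ 𝒮 → iefStar 𝒮 S
  | iso {S S' : Str Rel ar V} : iefStar 𝒮 S → IsoCopy S S' → iefStar 𝒮 S'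
  | fuse {S1 S2 S : Str Rel ar V} :
      iefStar 𝒮 S1 → iefStar 𝒮 S2 → S ∈ ExtFusion S1 S2 → iefStar 𝒮 S
  | intf {S1 S : Str Rel ar V} : iefStar 𝒮 S1 → S ∈ IntFusion S1 → iefStar 𝒮 S

def iefStarSet (𝒮 : Set (Str Rel ar V)) : Set (Str Rel ar V) := { S | iefStar 𝒮 S }

/-- The color of an element: the set of relation symbols whose interpretation contains
the constant tuple at this element. -/
def color (S : Str Rel ar V) (u : V) : Set Rel :=
  { r : Rel | (fun _ => u) ∈ S.interp r }

/-- The multiplicity of a color in the multiset color abstraction of a structure. -/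
noncomputable def colorMult (S : Str Rel ar V) (C : Set Rel) : ℕ :=
  {u ∈ S.supp | color S u = C}.ncard

/-- The `k`-multiset color abstraction of a structure: the sub-multisets of cardinality
at most `k` of the multiset of colors of its support elements. -/
noncomputable def MkOf (k : ℕ) (S : Str Rel ar V) : Set (Multiset (Set Rel)) :=
  { M | Multiset.card M ≤ k ∧
      ∀ C : Set Rel, @Multiset.count _ (Classical.decEq _) C M ≤ colorMult S C }

/-- The `k`-multiset color abstraction, lifted to sets of structures. -/
noncomputable def MkSet (k : ℕ) (𝒮 : Set (Str Rel ar V)) : Set (Multiset (Set Rel)) :=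
  ⋃ S ∈ 𝒮, MkOf k S

/-- A set of structures conforms to an RGB color scheme iff (1) in any member, if some
support element has a red color then all other support elements have blue colors, and
(2) in any external fusion of members, every green color occurs at most twice. -/
def Conforms (𝒮 : Set (Str Rel ar V)) (P : RGB Rel) : Prop :=
  (∀ S ∈ 𝒮, ∀ u ∈ S.supp, color S u ∈ P.red →
      ∀ v ∈ S.supp, v ≠ u → color S v ∈ P.blue) ∧
  (∀ S ∈ efStarSet 𝒮, ∀ C ∈ P.green, colorMult S C ≤ 2)

/-- Type `R` structures: only blue and red colors, with exactly one red element. -/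
def TypeR (P : RGB Rel) (S : Str Rel ar V) : Prop :=
  (∀ u ∈ S.supp, color S u ∈ P.blue ∨ color S u ∈ P.red) ∧
  {u ∈ S.supp | color S u ∈ P.red}.ncard = 1

/-- Type `G` structures: only blue and green colors, with at least one green element. -/
def TypeG (P : RGB Rel) (S : Str Rel ar V) : Prop :=
  (∀ u ∈ S.supp, color S u ∈ P.blue ∨ color S u ∈ P.green) ∧
  {u ∈ S.supp | color S u ∈ P.green}.Nonempty

/-- Type `B` structures: only blue colors. -/
def TypeB (P : RGB Rel) (S : Str Rel ar V) : Prop :=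
  ∀ u ∈ S.supp, color S u ∈ P.blue

namespace SID

/-- The set of predicate symbols occurring in an SID. -/
def predsOf (Δ : SID Rel ar Pr pa) : Set Pr :=
  {A | Δ.rules A ≠ ∅} ∪ ⋃ A, ⋃ φ ∈ Δ.rules A, SLR.preds φ

/-- The set of relation symbols occurring in an SID. -/
def relsOf (Δ : SID Rel ar Pr pa) : Set Rel :=
  ⋃ A, ⋃ φ ∈ Δ.rules A, SLR.rels φ

/-- The number of predicate symbols occurring in an SID. -/
noncomputable def Pcount (Δ : SID Rel ar Pr pa) : ℕ := Δ.predsOf.ncard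

/-- The number of relation symbols occurring in an SID. -/
noncomputable def Rcount (Δ : SID Rel ar Pr pa) : ℕ := Δ.relsOf.ncard

/-- The maximum number of variables (free or existentially quantified) occurring in a
rule of the SID. -/
noncomputable def maxvar (Δ : SID Rel ar Pr pa) : ℕ :=
  sSup { n | ∃ A, ∃ φ ∈ Δ.rules A, n = ({x | x < pa A} ∪ SLR.vars φ).ncard }

/-- The maximum number of predicate atoms occurring in a rule of the SID. -/
noncomputable def maxpredatoms (Δ : SID Rel ar Pr pa) : ℕ :=
  sSup { n | ∃ A, ∃ φ ∈ Δ.rules A, n = SLR.npred φ }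

/-- The maximum number of relation atoms occurring in a rule of the SID. -/
noncomputable def maxrelatoms (Δ : SID Rel ar Pr pa) : ℕ :=
  sSup { n | ∃ A, ∃ φ ∈ Δ.rules A, n = SLR.nrel φ }

/-- The maximum arity of a relation symbol occurring in the SID. -/
noncomputable def maxrelarity (Δ : SID Rel ar Pr pa) : ℕ :=
  sSup { n | ∃ r ∈ Δ.relsOf, n = ar r }

/-- The maximum arity of a predicate symbol occurring in the SID. -/
noncomputable def maxpredarity (Δ : SID Rel ar Pr pa) : ℕ :=
  sSup { n | ∃ A ∈ Δ.predsOf, n = pa A }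

/-- An SID is equality-free iff all its rules are equality-free. -/
def EqFree (Δ : SID Rel ar Pr pa) : Prop :=
  ∀ A, ∀ φ ∈ Δ.rules A, SLR.EqFreeF φ

end SID

/-- An SID is all-satisfiable for a nullary predicate `A` iff every predicate-free
outcome of a complete unfolding of `A` is satisfiable. -/
def AllSat (Δ : SID Rel ar Pr pa) (A : Pr) : Prop :=
  ∀ χ : SLR Rel ar Pr pa, Unfolds Δ (natom A) χ → χ.PredFree →
    ∃ (S : Str Rel ar V) (s : ℕ → V), Sat Δ S s χ

/-- An SID is expandable for a nullary predicate `A`: any finite family of pairwise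
disjoint canonical models embeds, as a substructure, into a rich canonical model, in a
way that neither disequalities nor overlapping tuples connect two distinct members. -/
def Expandable (Δ : SID Rel ar Pr pa) (A : Pr) : Prop :=
  ∀ (n : ℕ) (Ss : Fin n → Str Rel ar V),
    (∀ i, Ss i ∈ Canonical (V := V) Δ (natom A)) →
    (∀ i j, i ≠ j → (Ss i).supp ∩ (Ss j).supp = ∅) →
    ∃ (S : Str Rel ar V) (d : V → V → Prop),
      RichCanonical Δ (natom A) S d ∧
      Substr (bigComp Ss) S ∧
      (∀ i j : Fin n, i < j → ∀ u ∈ (Ss i).supp, ∀ v ∈ (Ss j).supp, ¬ d u v) ∧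
      ¬ ∃ (r : Rel) (t1 t2 : Fin (ar r) → V) (i j : Fin n),
          t1 ∈ S.interp r ∧ t2 ∈ S.interp r ∧ i < j ∧
          (∃ k, t1 k ∈ (Ss i).supp) ∧ (∃ k, t2 k ∈ (Ss j).supp) ∧ ∃ k l, t1 k = t2 l

/-- The set of structures obtained by internal fusion of rich canonical `Δ`-models. -/
def sifSet (Δ : SID Rel ar Pr pa) (φ : SLR Rel ar Pr pa) : Set (Str Rel ar V) :=
  { S' | ∃ (S : Str Rel ar V) (d : V → V → Prop),
      RichCanonical Δ φ S d ∧ S' ∈ SIntFusion S d }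

end Defs2

end SLRTW

/-!
Equalities and disequalities contribute no tuples, so adding them can only shrink the set of
models; adding a relation-only formula `ψ` adds at most `|fv ψ|` elements, which can be put into
every bag of a decomposition. For the lower bounds, take a model `(S, s)` of `φ` and move the
class of one variable, with respect to the equalities of `φ`, to a fresh element. The result is
again a model of `φ`; satisfiability of the extended formula guarantees that it satisfies the
new disequalities, resp. leaves room for the new tuple; and `S` is recovered from it by
identifying a single element with another, which raises the treewidth by at most one.
-/

namespace SLRTW

section Structures

variable {Rel : Type} {ar : Rel → ℕ} {V : Type}

attribute [ext] Str

@[simp]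
lemma Str.comp_interp (S1 S2 : Str Rel ar V) (r : Rel) :
    (S1.comp S2).interp r = S1.interp r ∪ S2.interp r := rfl

@[simp]
lemma mapStr_interp (h : V → V) (S : Str Rel ar V) (r : Rel) :
    (mapStr h S).interp r = (h ∘ ·) '' S.interp r := rfl

def Str.empty : Str Rel ar V where
  interp _ := ∅
  finite_interp _ := Set.finite_empty
  finite_active := by simp

lemma EmpS.eq_empty {S : Str Rel ar V} (h : EmpS S) : S = Str.empty :=
  Str.ext (funext h)

@[simp]
lemma Str.empty_comp (S : Str Rel ar V) : Str.empty.comp S = S := by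
  ext1; funext r; simp [Str.empty]

lemma mapStr_empty (h : V → V) : mapStr h (Str.empty : Str Rel ar V) = Str.empty := by
  ext1; funext r; simp [Str.empty]

lemma mapStr_comp (h : V → V) (S1 S2 : Str Rel ar V) :
    mapStr h (S1.comp S2) = (mapStr h S1).comp (mapStr h S2) := by
  ext1; funext r; simp [Set.image_union]

def Str.single (r : Rel) (t : Fin (ar r) → V) : Str Rel ar V where
  interp ρ := {u | (⟨ρ, u⟩ : Σ ρ, Fin (ar ρ) → V) = ⟨r, t⟩}
  finite_interp ρ := Set.Subsingleton.finite fun u hu v hv =>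
    eq_of_heq (Sigma.mk.inj_iff.mp (hu.trans hv.symm)).2
  finite_active := (Set.finite_singleton r).subset fun ρ hρ => by
    obtain ⟨u, hu⟩ := Set.nonempty_iff_ne_empty.mpr hρ
    exact (Sigma.mk.inj_iff.mp hu).1

@[simp]
lemma Str.single_interp_self (r : Rel) (t : Fin (ar r) → V) :
    (Str.single r t).interp r = {t} := by
  ext u; simp [Str.single]

lemma Str.single_interp_of_ne {r ρ : Rel} (t : Fin (ar r) → V) (h : ρ ≠ r) :
    (Str.single r t).interp ρ = ∅ :=
  Set.eq_empty_of_forall_notMem fun _ hu => h (Sigma.mk.inj_iff.mp hu).1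

lemma Str.single_interp_subsingleton (r : Rel) (t : Fin (ar r) → V) (ρ : Rel) :
    ((Str.single r t).interp ρ).Subsingleton := by
  by_cases hρ : ρ = r
  · subst hρ; simp
  · simp [Str.single_interp_of_ne _ hρ]

lemma mapStr_single (h : V → V) (r : Rel) (t : Fin (ar r) → V) :
    mapStr h (Str.single r t) = Str.single r (h ∘ t) := by
  ext1; funext ρ
  by_cases hρ : ρ = r
  · subst hρ; simp
  · simp [Str.single_interp_of_ne _ hρ]

lemma Str.supp_finite (S : Str Rel ar V) : S.supp.Finite := by
  refine (S.finite_active.biUnion fun r _ =>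
    (S.finite_interp r).biUnion fun t _ => Set.finite_range t).subset ?_
  rintro u ⟨r, t, ht, i, rfl⟩
  exact Set.mem_biUnion (Set.nonempty_iff_ne_empty.mp ⟨t, ht⟩) (Set.mem_biUnion ht ⟨i, rfl⟩)

lemma Str.supp_mono {S1 S2 : Str Rel ar V} (h : ∀ r, S1.interp r ⊆ S2.interp r) :
    S1.supp ⊆ S2.supp := by
  rintro u ⟨r, t, ht, i, rfl⟩
  exact ⟨r, t, h r ht, i, rfl⟩

end Structures

section Treewidth

variable {Rel : Type} {ar : Rel → ℕ} {V : Type}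

lemma tw_le_width {S : Str Rel ar V} (T : TreeDecomp S) : tw S ≤ T.width :=
  Nat.sInf_le ⟨T, rfl⟩

lemma exists_treeDecomp_width_eq_tw (S : Str Rel ar V) :
    ∃ T : TreeDecomp S, T.width = tw S := by
  have hconn : ∀ s : Set PUnit, s.Nonempty → (SimpleGraph.induce s ⊥).Connected :=
    fun s ⟨w, hw⟩ =>
      haveI : Nonempty s := ⟨⟨w, hw⟩⟩
      { preconnected := fun a b => Subsingleton.elim a b ▸ .refl a }
  let T : TreeDecomp S :=
    { ι := PUnit
      instFin := inferInstance
      G := ⊥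
      isTree := ⟨⟨fun a b => Subsingleton.elim a b ▸ .refl a⟩, SimpleGraph.isAcyclic_bot⟩
      bag := fun _ => S.supp_finite.toFinset
      bag_cover := fun r t ht => ⟨.unit, fun i => S.supp_finite.mem_toFinset.mpr ⟨r, t, ht, i, rfl⟩⟩
      bag_conn := fun u hu => hconn _ ⟨.unit, S.supp_finite.mem_toFinset.mpr hu⟩ }
  exact Nat.sInf_mem (s := {w | ∃ T : TreeDecomp S, T.width = w}) ⟨T.width, T, rfl⟩

lemma tw_le_width_add_of_bags [DecidableEq V] {S S' : Str Rel ar V} (T : TreeDecomp S)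
    (B : T.ι → Finset V) (K : Finset V) (hcard : ∀ n, (B n).card ≤ (T.bag n).card)
    (hcover : ∀ r, ∀ t ∈ S'.interp r, ∃ n, ∀ i, t i ∈ B n ∪ K)
    (hconn : ∀ v ∈ S'.supp, v ∉ K → v ∈ S.supp ∧ ∀ n, v ∈ B n ↔ v ∈ T.bag n) :
    tw S' ≤ T.width + K.card := by
  let T' : TreeDecomp S' :=
    { ι := T.ι
      instFin := T.instFin
      G := T.G
      isTree := T.isTree
      bag := fun n => B n ∪ K
      bag_cover := hcover
      bag_conn := fun v hv => by
        by_cases hvK : v ∈ K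
        · have huniv : {n | v ∈ B n ∪ K} = Set.univ :=
            Set.eq_univ_of_forall fun n => Finset.mem_union_right _ hvK
          rw [huniv]
          exact (SimpleGraph.induceUnivIso T.G).connected_iff.mpr T.isTree.1
        · obtain ⟨hvS, hvB⟩ := hconn v hv hvK
          have hbags : {n | v ∈ B n ∪ K} = {n | v ∈ T.bag n} := by
            ext n; simp [hvK, hvB]
          rw [hbags]
          exact T.bag_conn v hvS }
  have hsup : Finset.univ.sup (fun n => (B n ∪ K).card) ≤
      Finset.univ.sup (fun n => (T.bag n).card) + K.card :=
    Finset.sup_le fun n _ => (Finset.card_union_le _ _).trans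
      (Nat.add_le_add_right ((hcard n).trans
        (Finset.le_sup (f := fun n => (T.bag n).card) (Finset.mem_univ n))) _)
  refine (tw_le_width T').trans ?_
  simp only [TreeDecomp.width, T'] at hsup ⊢
  omega

lemma tw_mono {S1 S2 : Str Rel ar V} (h : ∀ r, S1.interp r ⊆ S2.interp r) :
    tw S1 ≤ tw S2 := by
  classical
  obtain ⟨T, hT⟩ := exists_treeDecomp_width_eq_tw S2
  simpa [hT] using tw_le_width_add_of_bags T T.bag ∅ (fun _ => le_rfl)
    (fun r t ht => by simpa using T.bag_cover r t (h r ht))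
    (fun v hv _ => ⟨Str.supp_mono h hv, fun _ => Iff.rfl⟩)

lemma tw_le_tw_comp (S1 S2 : Str Rel ar V) : tw S1 ≤ tw (S1.comp S2) :=
  tw_mono fun _ => Set.subset_union_left

lemma tw_comp_le (S1 S2 : Str Rel ar V) : tw (S1.comp S2) ≤ tw S1 + S2.supp.ncard := by
  classical
  obtain ⟨T, hT⟩ := exists_treeDecomp_width_eq_tw S1
  have hK : ∀ v, v ∈ S2.supp_finite.toFinset ↔ v ∈ S2.supp := fun _ => S2.supp_finite.mem_toFinset
  rw [← hT, Set.ncard_eq_toFinset_card _ S2.supp_finite]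
  refine tw_le_width_add_of_bags T T.bag _ (fun _ => le_rfl) ?_ ?_
  · rintro r t (ht | ht)
    · obtain ⟨n, hn⟩ := T.bag_cover r t ht
      exact ⟨n, fun i => Finset.mem_union_left _ (hn i)⟩
    · obtain ⟨n⟩ := T.isTree.1.nonempty
      exact ⟨n, fun i => Finset.mem_union_right _ ((hK _).mpr ⟨r, t, ht, i, rfl⟩)⟩
  · rintro v ⟨r, t, ht | ht, i, rfl⟩ hv
    · exact ⟨⟨r, t, ht, i, rfl⟩, fun _ => Iff.rfl⟩
    · exact absurd ((hK _).mpr ⟨r, t, ht, i, rfl⟩) hv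

lemma tw_mapStr_le {u : V} {h : V → V} (hid : ∀ w, w ≠ u → h w = w) (S : Str Rel ar V) :
    tw (mapStr h S) ≤ tw S + 1 := by
  classical
  obtain ⟨T, hT⟩ := exists_treeDecomp_width_eq_tw S
  rw [← hT, ← Finset.card_singleton (h u)]
  refine tw_le_width_add_of_bags T (fun n => (T.bag n).image h) _
    (fun _ => Finset.card_image_le) ?_ ?_
  · rintro r _ ⟨t, ht, rfl⟩
    obtain ⟨n, hn⟩ := T.bag_cover r t ht
    exact ⟨n, fun i => Finset.mem_union_left _ (Finset.mem_image_of_mem h (hn i))⟩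
  · rintro _ ⟨r, _, ⟨t, ht, rfl⟩, i, rfl⟩ hv
    have hti : t i ≠ u := by rintro hti; simp [hti] at hv
    simp only [Function.comp_apply, hid _ hti] at hv ⊢
    refine ⟨⟨r, t, ht, i, rfl⟩, fun n => ⟨fun hmem => ?_, fun htn => ?_⟩⟩
    · obtain ⟨w, hw, hwt⟩ := Finset.mem_image.mp hmem
      have hwu : w ≠ u := by rintro rfl; simp [hwt] at hv
      rwa [← hwt, hid w hwu]
    · exact Finset.mem_image.mpr ⟨t i, htn, hid _ hti⟩

lemma twSet_mono {A B : Set (Str Rel ar V)} (h : A ⊆ B) : twSet A ≤ twSet B :=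
  biSup_mono h

lemma twSet_le_add {A B : Set (Str Rel ar V)} {c : ℕ}
    (h : ∀ S ∈ A, ∃ S' ∈ B, tw S ≤ tw S' + c) : twSet A ≤ twSet B + c :=
  iSup₂_le fun S hS => by
    obtain ⟨S', hS', hle⟩ := h S hS
    calc (tw S : ℕ∞) ≤ tw S' + c := by exact_mod_cast hle
      _ ≤ twSet B + c := by gcongr; exact le_iSup₂ (f := fun S (_ : S ∈ B) => (tw S : ℕ∞)) S' hS'

end Treewidth

namespace SLR

variable {Rel : Type} {ar : Rel → ℕ} {Pr : Type} {pa : Pr → ℕ}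

def relAtoms : SLR Rel ar Pr pa → Set (Σ r, Fin (ar r) → ℕ)
  | .rel r a => {⟨r, a⟩}
  | .star φ ψ => φ.relAtoms ∪ ψ.relAtoms
  | _ => ∅

lemma range_subset_fv_of_mem_relAtoms {χ : SLR Rel ar Pr pa} {r : Rel} {a : Fin (ar r) → ℕ}
    (h : ⟨r, a⟩ ∈ χ.relAtoms) : Set.range a ⊆ χ.fv := by
  induction χ with
  | rel r' a' =>
    obtain ⟨rfl, ha⟩ := Sigma.mk.inj_iff.mp h
    rw [eq_of_heq ha]
    rfl
  | star φ ψ ih1 ih2 =>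
    exact h.elim (fun h => (ih1 h).trans Set.subset_union_left)
      (fun h => (ih2 h).trans Set.subset_union_right)
  | _ => exact h.elim

lemma eqOccurs_symm {χ : SLR Rel ar Pr pa} {y z : ℕ} (h : χ.eqOccurs y z) :
    χ.eqOccurs z y := by
  induction χ with
  | eq a b => exact h.symm
  | star φ ψ ih1 ih2 => exact h.imp ih1 ih2
  | ex a φ ih => exact ih h
  | _ => exact h.elim

lemma fv_finite (χ : SLR Rel ar Pr pa) : χ.fv.Finite := by
  induction χ with
  | emp => exact Set.finite_empty
  | eq x y | ne x y => exact (Set.finite_singleton y).insert x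
  | rel r a | pred A a => exact Set.finite_range a
  | star φ ψ ih1 ih2 => exact ih1.union ih2
  | ex x φ ih => exact ih.sdiff

lemma ncard_fv_rel_le (r : Rel) (a : Fin (ar r) → ℕ) :
    (SLR.rel r a : SLR Rel ar Pr pa).fv.ncard ≤ ar r := by
  have := Finite.card_range_le a
  rwa [Nat.card_coe_set_eq, Nat.card_eq_fintype_card, Fintype.card_fin] at this

end SLR

section Semantics

variable {Rel : Type} {ar : Rel → ℕ} {V : Type} {Pr : Type} {pa : Pr → ℕ}
  {Δ : SID Rel ar Pr pa} {χ φ ψ : SLR Rel ar Pr pa} {S : Str Rel ar V} {s : ℕ → V}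

lemma sat_rel_iff {r : Rel} {a : Fin (ar r) → ℕ} :
    Sat Δ S s (.rel r a) ↔ S = Str.single r (s ∘ a) := by
  constructor
  · intro h
    obtain ⟨hr, hother⟩ : S.interp r = {s ∘ a} ∧ ∀ ρ, ρ ≠ r → S.interp ρ = ∅ := by
      cases h with | rel hr hother => exact ⟨hr, hother⟩
    ext1; funext ρ
    by_cases hρ : ρ = r
    · subst hρ; rw [hr, Str.single_interp_self]
    · rw [hother ρ hρ, Str.single_interp_of_ne _ hρ]
  · rintro rfl
    exact .rel (Str.single_interp_self r _) fun _ => Str.single_interp_of_ne _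

lemma sat_ne_iff {x y : ℕ} : Sat Δ S s (.ne x y) ↔ EmpS S ∧ s x ≠ s y :=
  ⟨fun h => by cases h with | ne he hxy => exact ⟨he, hxy⟩, fun h => .ne h.1 h.2⟩

lemma Sat.eq_of_eqOccurs (hχ : χ.QPF) (h : Sat Δ S s χ) {y z : ℕ} (ho : χ.eqOccurs y z) :
    s y = s z := by
  induction χ generalizing S with
  | eq a b =>
    cases h with
    | eq _ hab => rcases ho with ⟨rfl, rfl⟩ | ⟨rfl, rfl⟩ <;> [exact hab; exact hab.symm]
  | star φ ψ ih1 ih2 =>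
    cases h with
    | star _ h1 h2 => exact ho.elim (ih1 hχ.1 h1) (ih2 hχ.2 h2)
  | pred | ex => exact hχ.elim
  | _ => exact ho.elim

lemma Sat.eq_of_eqvGen (hχ : χ.QPF) (h : Sat Δ S s χ) {y z : ℕ}
    (ho : Relation.EqvGen χ.eqOccurs y z) : s y = s z := by
  induction ho with
  | rel a b hab => exact h.eq_of_eqOccurs hχ hab
  | refl => rfl
  | symm _ _ _ ih => exact ih.symm
  | trans _ _ _ _ _ ih1 ih2 => exact ih1.trans ih2

lemma Sat.interp_eq_relAtoms (hχ : χ.QPF) (h : Sat Δ S s χ) (r : Rel) :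
    S.interp r = {t | ∃ a, ⟨r, a⟩ ∈ χ.relAtoms ∧ t = s ∘ a} := by
  induction χ generalizing S with
  | emp | eq | ne =>
    cases h with
    | _ he => ext t; simp [he r, SLR.relAtoms]
  | rel r' a' =>
    obtain rfl := sat_rel_iff.mp h
    ext t
    by_cases hr : r = r'
    · subst hr; simp [SLR.relAtoms, eq_comm]
    · simp [Str.single_interp_of_ne _ hr, SLR.relAtoms, hr]
  | star φ ψ ih1 ih2 =>
    cases h with
    | star _ h1 h2 =>
      rw [Str.comp_interp, ih1 hχ.1 h1, ih2 hχ.2 h2]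
      ext t; simp [SLR.relAtoms, or_and_right, exists_or]
  | pred | ex => exact hχ.elim

lemma Sat.supp_subset (hχ : χ.QPF) (h : Sat Δ S s χ) : S.supp ⊆ s '' χ.fv := by
  rintro _ ⟨r, t, ht, i, rfl⟩
  rw [h.interp_eq_relAtoms hχ] at ht
  obtain ⟨a, ha, rfl⟩ := ht
  exact ⟨a i, SLR.range_subset_fv_of_mem_relAtoms ha ⟨i, rfl⟩, rfl⟩

lemma Sat.star_single (h : Sat Δ S s φ) {r : Rel} {a : Fin (ar r) → ℕ}
    (hr : s ∘ a ∉ S.interp r) :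
    Sat Δ (S.comp (Str.single r (s ∘ a))) s (.star φ (.rel r a)) := by
  refine .star (fun ρ => ?_) h (sat_rel_iff.mpr rfl)
  by_cases hρ : ρ = r
  · subst hρ
    rw [Str.single_interp_self, Set.inter_singleton_eq_empty]
    exact hr
  · rw [Str.single_interp_of_ne _ hρ, Set.inter_empty]

lemma sat_starAll_iff {l : List (SLR Rel ar Pr pa)}
    (hl : ∀ χ ∈ l, ∀ (S : Str Rel ar V) s, Sat Δ S s χ → EmpS S) :
    Sat Δ S s (starAll φ l) ↔ Sat Δ S s φ ∧ ∀ χ ∈ l, Sat Δ Str.empty s χ := by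
  induction l generalizing S with
  | nil => simp [starAll]
  | cons χ l ih =>
    have hl' := fun χ' hχ' => hl χ' (List.mem_cons_of_mem _ hχ')
    simp only [starAll, List.forall_mem_cons]
    constructor
    · intro h
      cases h with
      | star _ h1 h2 =>
        obtain rfl := (hl χ List.mem_cons_self _ _ h1).eq_empty
        rw [Str.empty_comp]
        exact ((ih hl').mp h2).imp_right (⟨h1, ·⟩)
    · rintro ⟨hφ, h1, hrest⟩
      rw [← Str.empty_comp S]
      exact .star (fun _ => Set.empty_inter _) h1 ((ih hl').mpr ⟨hφ, hrest⟩)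

lemma Sat.of_starAll_eq {k x0 : ℕ} {x : Fin k → ℕ}
    (h : Sat Δ S s (starAll φ (List.ofFn fun i => .eq x0 (x i)))) : Sat Δ S s φ :=
  ((sat_starAll_iff (List.forall_mem_ofFn_iff.mpr fun _ _ _ h => by
    cases h with | eq he _ => exact he)).mp h).1

lemma sat_starAll_ne_iff {k x0 : ℕ} {x : Fin k → ℕ} :
    Sat Δ S s (starAll φ (List.ofFn fun i => .ne x0 (x i))) ↔
      Sat Δ S s φ ∧ ∀ i, s x0 ≠ s (x i) := by
  rw [sat_starAll_iff (List.forall_mem_ofFn_iff.mpr fun _ _ _ h => (sat_ne_iff.mp h).1),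
    List.forall_mem_ofFn_iff]
  simp [sat_ne_iff, EmpS, Str.empty]

lemma EmpS.eq_mapStr {S : Str Rel ar V} (he : EmpS S) (h : V → V) : S = mapStr h S := by
  rw [he.eq_empty, mapStr_empty]

lemma Sat.exists_preimage (hχ : χ.QPF) (hsat : Sat Δ S s χ) (h : V → V) (s' : ℕ → V)
    (hup : ∀ y ∈ χ.fv, h (s' y) = s y) (heq : ∀ y z, χ.eqOccurs y z → s' y = s' z) :
    ∃ S' : Str Rel ar V, Sat Δ S' s' χ ∧ S = mapStr h S' ∧
      ∀ r, Set.InjOn (h ∘ ·) (S'.interp r) := by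
  induction χ generalizing S with
  | emp =>
    cases hsat with
    | emp he => exact ⟨S, .emp he, he.eq_mapStr h, fun r => he r ▸ Set.injOn_empty _⟩
  | eq a b =>
    cases hsat with
    | eq he _ =>
      exact ⟨S, .eq he (heq a b (Or.inl ⟨rfl, rfl⟩)), he.eq_mapStr h,
        fun r => he r ▸ Set.injOn_empty _⟩
  | ne a b =>
    cases hsat with
    | ne he hab =>
      refine ⟨S, .ne he fun hs' => hab ?_, he.eq_mapStr h, fun r => he r ▸ Set.injOn_empty _⟩
      rw [← hup a (by simp [SLR.fv]), ← hup b (by simp [SLR.fv]), hs']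
  | rel r a =>
    refine ⟨Str.single r (s' ∘ a), sat_rel_iff.mpr rfl, ?_,
      fun ρ => (Str.single_interp_subsingleton _ _ ρ).injOn _⟩
    rw [sat_rel_iff.mp hsat, mapStr_single]
    congr 1
    funext i
    exact (hup (a i) ⟨i, rfl⟩).symm
  | star φ ψ ih1 ih2 =>
    cases hsat with
    | star hd h1 h2 =>
      obtain ⟨S1, hS1, rfl, hinj1⟩ := ih1 hχ.1 h1
        (fun y hy => hup y (Or.inl hy)) (fun y z hyz => heq y z (Or.inl hyz))
      obtain ⟨S2, hS2, rfl, hinj2⟩ := ih2 hχ.2 h2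
        (fun y hy => hup y (Or.inr hy)) (fun y z hyz => heq y z (Or.inr hyz))
      have hdisj : ∀ r, ∀ t1 ∈ S1.interp r, ∀ t2 ∈ S2.interp r, h ∘ t1 ≠ h ∘ t2 :=
        fun r t1 ht1 t2 ht2 he => (hd r).subset ⟨⟨t1, ht1, rfl⟩, ⟨t2, ht2, he.symm⟩⟩
      have hd' : LocDisj S1 S2 := fun r => Set.eq_empty_of_forall_notMem
        fun t ⟨ht1, ht2⟩ => hdisj r t ht1 t ht2 rfl
      refine ⟨S1.comp S2, .star hd' hS1 hS2, (mapStr_comp h S1 S2).symm, fun r => ?_⟩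
      exact (Set.injOn_union (Set.disjoint_iff_inter_eq_empty.mpr (hd' r))).mpr
        ⟨hinj1 r, hinj2 r, hdisj r⟩
  | pred | ex => exact hχ.elim

/-- Moving the class of `x0` (under the equalities of `φ`) to a fresh element `u` gives a model
`(S', s')` of `φ` from which `S` is recovered by identifying `u` with `s x0`. -/
lemma Sat.exists_split [Infinite V] (hφ : φ.QPF) (hs : Sat Δ S s φ) (x0 : ℕ) {F : Set ℕ}
    (hF : F.Finite) (hfv : φ.fv ⊆ F) :
    ∃ (S' : Str Rel ar V) (s' : ℕ → V) (h : V → V), Sat Δ S' s' φ ∧ tw S ≤ tw S' + 1 ∧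
      (∀ r, Set.InjOn (h ∘ ·) (S'.interp r)) ∧ (∀ y ∈ F, h (s' y) = s y) ∧
      ∀ y ∈ F, (s' y = s' x0 ↔ Relation.EqvGen φ.eqOccurs y x0) := by
  classical
  obtain ⟨u, hu⟩ := (hF.image s).infinite_compl.nonempty
  have hfresh : ∀ y ∈ F, s y ≠ u := fun y hy hyu => hu ⟨y, hy, hyu⟩
  set E := Relation.EqvGen φ.eqOccurs
  let s' : ℕ → V := fun y => if E y x0 then u else s y
  let h : V → V := Function.update id u (s x0)
  have hs'x0 : s' x0 = u := if_pos (.refl x0)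
  have hup : ∀ y ∈ F, h (s' y) = s y := by
    intro y hy
    by_cases hy0 : E y x0
    · simp [s', h, hy0, hs.eq_of_eqvGen hφ hy0]
    · simp [s', h, hy0, hfresh y hy]
  have heq : ∀ y z, φ.eqOccurs y z → s' y = s' z := by
    intro y z hyz
    have hiff : E y x0 ↔ E z x0 :=
      ⟨(Relation.EqvGen.rel _ _ (SLR.eqOccurs_symm hyz)).trans _ _ _,
        (Relation.EqvGen.rel _ _ hyz).trans _ _ _⟩
    by_cases hy0 : E y x0
    · simp [s', hy0, hiff.mp hy0]
    · simp [s', hy0, mt hiff.mpr hy0, hs.eq_of_eqOccurs hφ hyz]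
  obtain ⟨S', hS', rfl, hinj⟩ := hs.exists_preimage hφ h s' (fun y hy => hup y (hfv hy)) heq
  refine ⟨S', s', h, hS', tw_mapStr_le (fun w hw => Function.update_of_ne hw _ _) S', hinj,
    hup, fun y hy => ?_⟩
  by_cases hy0 : E y x0
  · simp [hs'x0, s', hy0]
  · simp [hs'x0, s', hy0, hfresh y hy]

lemma exists_model_starAll_ne [Infinite V] (hφ : φ.QPF) {k x0 : ℕ} {x : Fin k → ℕ}
    (hsat : ∃ (S : Str Rel ar V) (s : ℕ → V),
      Sat Δ S s (starAll φ (List.ofFn fun i => .ne x0 (x i))))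
    (hS : S ∈ SMod (V := V) Δ φ) :
    ∃ S' ∈ SMod (V := V) Δ (starAll φ (List.ofFn fun i => .ne x0 (x i))), tw S ≤ tw S' + 1 := by
  obtain ⟨s, hs⟩ := hS
  obtain ⟨_, sw, hw⟩ := hsat
  obtain ⟨hwφ, hwne⟩ := sat_starAll_ne_iff.mp hw
  obtain ⟨S', s', -, hS', htw, -, -, hclass⟩ :=
    hs.exists_split hφ x0 (φ.fv_finite.union (Set.finite_range x)) Set.subset_union_left
  refine ⟨S', ⟨s', sat_starAll_ne_iff.mpr ⟨hS', fun i hi => ?_⟩⟩, htw⟩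
  exact hwne i (hwφ.eq_of_eqvGen hφ ((hclass (x i) (Or.inr ⟨i, rfl⟩)).mp hi.symm)).symm

lemma exists_not_eqvGen_of_sat_star_rel (hφ : φ.QPF) {r : Rel} {a x' : Fin (ar r) → ℕ}
    (ha : ⟨r, a⟩ ∈ φ.relAtoms)
    (hsat : ∃ (S : Str Rel ar V) (s : ℕ → V), Sat Δ S s (.star φ (.rel r x'))) :
    ∃ i, ¬ Relation.EqvGen φ.eqOccurs (a i) (x' i) := by
  obtain ⟨_, sw, hw⟩ := hsat
  cases hw with
  | @star S1 S2 _ _ _ hd h1 h2 =>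
    by_contra! hall
    have hmem : sw ∘ a ∈ S1.interp r := by rw [h1.interp_eq_relAtoms hφ]; exact ⟨a, ha, rfl⟩
    have hax : sw ∘ a = sw ∘ x' := funext fun i => h1.eq_of_eqvGen hφ (hall i)
    rw [sat_rel_iff.mp h2] at hd
    exact (hd r).subset ⟨hmem, by simp [hax]⟩

lemma exists_model_star_rel [Infinite V] (hφ : φ.QPF) {r : Rel} {x' : Fin (ar r) → ℕ}
    (hsat : ∃ (S : Str Rel ar V) (s : ℕ → V), Sat Δ S s (.star φ (.rel r x')))
    (hS : S ∈ SMod (V := V) Δ φ) :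
    ∃ S' ∈ SMod (V := V) Δ (.star φ (.rel r x')), tw S ≤ tw S' + 1 := by
  obtain ⟨s, hs⟩ := hS
  by_cases hfresh : s ∘ x' ∉ S.interp r
  · exact ⟨_, ⟨s, hs.star_single hfresh⟩, (tw_le_tw_comp _ _).trans (Nat.le_succ _)⟩
  rw [not_not, hs.interp_eq_relAtoms hφ] at hfresh
  obtain ⟨a, ha, hxa⟩ := hfresh
  have hfv : ∀ i, a i ∈ φ.fv := fun i => SLR.range_subset_fv_of_mem_relAtoms ha ⟨i, rfl⟩
  obtain ⟨i0, hi0⟩ := exists_not_eqvGen_of_sat_star_rel hφ ha hsat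
  obtain ⟨S', s', h, hS', htw, hinj, hup, hclass⟩ :=
    hs.exists_split hφ (x' i0) (φ.fv_finite.union (Set.finite_range x')) Set.subset_union_left
  -- `s ∘ x'` was the tuple of the atom `r(a)`; after the split the two tuples differ at `i0`.
  have hnew : s' ∘ x' ∉ S'.interp r := by
    intro hmem
    have hmem_a : s' ∘ a ∈ S'.interp r := by rw [hS'.interp_eq_relAtoms hφ]; exact ⟨a, ha, rfl⟩
    have himg : h ∘ (s' ∘ x') = h ∘ (s' ∘ a) := funext fun i => by
      simp only [Function.comp_apply]
      rw [hup _ (Or.inr ⟨i, rfl⟩), hup _ (Or.inl (hfv i))]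
      exact congrFun hxa i
    exact hi0 ((hclass _ (Or.inl (hfv i0))).mp (congrFun (hinj r hmem hmem_a himg) i0).symm)
  exact ⟨_, ⟨s', hS'.star_single hnew⟩, htw.trans (Nat.add_le_add_right (tw_le_tw_comp _ _) 1)⟩

lemma exists_model_of_star (hψ : ψ.QPF) (hS : S ∈ SMod (V := V) Δ (.star φ ψ)) :
    ∃ S1 ∈ SMod (V := V) Δ φ, tw S ≤ tw S1 + ψ.fv.ncard := by
  obtain ⟨s, hs⟩ := hS
  cases hs with
  | star _ h1 h2 =>
    refine ⟨_, ⟨s, h1⟩, (tw_comp_le _ _).trans (Nat.add_le_add_left ?_ _)⟩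
    exact (Set.ncard_le_ncard (h2.supp_subset hψ) (ψ.fv_finite.image s)).trans
      (Set.ncard_image_le ψ.fv_finite)

end Semantics

theorem qpf_treewidth_general
    (Rel : Type) (ar : Rel → ℕ)
    (V : Type) [Infinite V] (Pr : Type) (pa : Pr → ℕ) (Δ : SID Rel ar Pr pa)
    (φ ψ : SLR Rel ar Pr pa) (hφ : φ.QPF) (hψ : ψ.QPF)
    (k : ℕ) (r : Rel) (hk : ar r = k) (x0 : ℕ) (x : Fin k → ℕ) :
    (twSet (SMod (V := V) Δ (starAll φ (List.ofFn fun i => .eq x0 (x i)))) ≤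
        twSet (SMod (V := V) Δ φ)) ∧
    ((∃ (S : Str Rel ar V) (s : ℕ → V),
        Sat Δ S s (starAll φ (List.ofFn fun i => .ne x0 (x i)))) →
      twSet (SMod (V := V) Δ φ) ≤
          twSet (SMod (V := V) Δ (starAll φ (List.ofFn fun i => .ne x0 (x i)))) + 1 ∧
        twSet (SMod (V := V) Δ (starAll φ (List.ofFn fun i => .ne x0 (x i)))) ≤
          twSet (SMod (V := V) Δ φ)) ∧
    ((∃ (S : Str Rel ar V) (s : ℕ → V),
        Sat Δ S s (.star φ (.rel r fun i => x (Fin.cast hk i)))) →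
      twSet (SMod (V := V) Δ φ) ≤
          twSet (SMod (V := V) Δ (.star φ (.rel r fun i => x (Fin.cast hk i)))) + 1 ∧
        twSet (SMod (V := V) Δ (.star φ (.rel r fun i => x (Fin.cast hk i)))) ≤
          twSet (SMod (V := V) Δ φ) + (k : ℕ∞)) ∧
    (ψ.RelOnly →
      twSet (SMod (V := V) Δ (.star φ ψ)) ≤
        twSet (SMod (V := V) Δ φ) + ((ψ.fv.ncard : ℕ) : ℕ∞)) := by
  refine ⟨twSet_mono fun S ⟨s, hs⟩ => ⟨s, hs.of_starAll_eq⟩, fun hsat => ⟨?_, ?_⟩,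
    fun hsat => ⟨?_, ?_⟩, fun _ => twSet_le_add fun S hS => exists_model_of_star hψ hS⟩
  · exact_mod_cast twSet_le_add fun S hS => exists_model_starAll_ne hφ hsat hS
  · exact twSet_mono fun S ⟨s, hs⟩ => ⟨s, (sat_starAll_ne_iff.mp hs).1⟩
  · exact_mod_cast twSet_le_add fun S hS => exists_model_star_rel hφ hsat hS
  · refine (twSet_le_add fun S hS => exists_model_of_star (ψ := .rel r _) trivial hS).trans ?_
    gcongr
    exact (SLR.ncard_fv_rel_le r _).trans hk.le

/-- Lemma 2.10: effect on the treewidth of the set of models of the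
existential closure of a qpf formula of adding equalities, disequalities, or relation
atoms. -/
theorem qpf_treewidth
    (Rel : Type) [Fintype Rel] (ar : Rel → ℕ) (har : ∀ r, 1 ≤ ar r)
    (V : Type) [Infinite V] (Pr : Type) (pa : Pr → ℕ) (Δ : SID Rel ar Pr pa)
    (φ ψ : SLR Rel ar Pr pa) (hφ : φ.QPF) (hψ : ψ.QPF)
    (k : ℕ) (r : Rel) (hk : ar r = k) (x0 : ℕ) (x : Fin k → ℕ) :
    (twSet (SMod (V := V) Δ (starAll φ (List.ofFn fun i => .eq x0 (x i)))) ≤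
        twSet (SMod (V := V) Δ φ)) ∧
    ((∃ (S : Str Rel ar V) (s : ℕ → V),
        Sat Δ S s (starAll φ (List.ofFn fun i => .ne x0 (x i)))) →
      twSet (SMod (V := V) Δ φ) ≤
          twSet (SMod (V := V) Δ (starAll φ (List.ofFn fun i => .ne x0 (x i)))) + 1 ∧
        twSet (SMod (V := V) Δ (starAll φ (List.ofFn fun i => .ne x0 (x i)))) ≤
          twSet (SMod (V := V) Δ φ)) ∧
    ((∃ (S : Str Rel ar V) (s : ℕ → V),
        Sat Δ S s (.star φ (.rel r fun i => x (Fin.cast hk i)))) →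
      twSet (SMod (V := V) Δ φ) ≤
          twSet (SMod (V := V) Δ (.star φ (.rel r fun i => x (Fin.cast hk i)))) + 1 ∧
        twSet (SMod (V := V) Δ (.star φ (.rel r fun i => x (Fin.cast hk i)))) ≤
          twSet (SMod (V := V) Δ φ) + (k : ℕ∞)) ∧
    (ψ.RelOnly →
      twSet (SMod (V := V) Δ (.star φ ψ)) ≤
        twSet (SMod (V := V) Δ φ) + ((ψ.fv.ncard : ℕ) : ℕ∞)) :=
  qpf_treewidth_general Rel ar V Pr pa Δ φ ψ hφ hψ k r hk x0 x

end SLRTW
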